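/- arXiv:2403.16208 — 3 statements merged into one kernel-verified Lean document; each statement's English description precedes it below -/
import Mathlib

section
/- Let X be a first-countable topological space and let (f_n) be a sequence of functionals f_n : X → ℝ ∪ {+∞} that Γ-converges to a functional f : X → ℝ ∪ {+∞}. Suppose for each n the point x_n ∈ X is a global minimizer of f_n, and suppose some subsequence (x_{n_k}) converges to a point x ∈ X. Then x is a global minimizer of f, i.e. f(x) = inf_{y ∈ X} f(y). -/
/-!
Write `m n := inf f_n = f_n(x_n)`. Taking the whole space as neighbourhood in the definition of
the Γ-limsup gives `limsup m ≤ f(y)` for every `y`. Conversely, every neighbourhood of `x`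
eventually contains `x_{n_k}`, so the Γ-liminf at `x` is at most `liminf_k m(n_k)`. Hence
`f(x) ≤ liminf_k m(n_k) ≤ limsup m ≤ inf f`.
-/

open Filter Topology

/-- The Γ-liminf of a sequence of extended-real-valued functionals:
`Γ-liminf_n f_n(x) = sup_{N open ∋ x} liminf_{n→∞} inf_{y ∈ N} f_n(y)`. -/
noncomputable def gammaLiminf {X : Type*} [TopologicalSpace X]
    (f : ℕ → X → EReal) (x : X) : EReal :=
  ⨆ (N : Set X) (_ : IsOpen N) (_ : x ∈ N),
    Filter.liminf (fun n => ⨅ y ∈ N, f n y) Filter.atTop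

/-- The Γ-limsup of a sequence of extended-real-valued functionals:
`Γ-limsup_n f_n(x) = sup_{N open ∋ x} limsup_{n→∞} inf_{y ∈ N} f_n(y)`. -/
noncomputable def gammaLimsup {X : Type*} [TopologicalSpace X]
    (f : ℕ → X → EReal) (x : X) : EReal :=
  ⨆ (N : Set X) (_ : IsOpen N) (_ : x ∈ N),
    Filter.limsup (fun n => ⨅ y ∈ N, f n y) Filter.atTop

/-- `(f_n)` Γ-converges to `f` if the Γ-liminf and Γ-limsup both coincide with `f` pointwise. -/
def GammaConvergesTo {X : Type*} [TopologicalSpace X]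
    (f : ℕ → X → EReal) (g : X → EReal) : Prop :=
  ∀ x, gammaLiminf f x = g x ∧ gammaLimsup f x = g x

section

variable {X : Type*} [TopologicalSpace X]

theorem limsup_iInf_le_gammaLimsup (f : ℕ → X → EReal) (y : X) :
    limsup (fun n => ⨅ z, f n z) atTop ≤ gammaLimsup f y := by
  refine le_iSup_of_le Set.univ (le_iSup₂_of_le isOpen_univ (Set.mem_univ y) ?_)
  simp only [Set.mem_univ, iInf_pos, le_refl]

theorem gammaLiminf_le_liminf_of_tendsto (f : ℕ → X → EReal) {φ : ℕ → ℕ}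
    (hφ : Tendsto φ atTop atTop) {y : ℕ → X} {x : X} (hy : Tendsto y atTop (𝓝 x)) :
    gammaLiminf f x ≤ liminf (fun k => f (φ k) (y k)) atTop := by
  refine iSup₂_le fun N hN => iSup_le fun hxN => ?_
  have h_eventually_le : ∀ᶠ k in atTop, (⨅ z ∈ N, f (φ k) z) ≤ f (φ k) (y k) := by
    filter_upwards [hy (hN.mem_nhds hxN)] with k hk
    exact iInf₂_le (y k) hk
  calc liminf (fun n => ⨅ z ∈ N, f n z) atTop
      ≤ liminf ((fun n => ⨅ z ∈ N, f n z) ∘ φ) atTop := hφ.liminf_le_liminf_comp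
    _ ≤ liminf (fun k => f (φ k) (y k)) atTop := liminf_le_liminf h_eventually_le

end

theorem stmt0_general {X : Type*} [TopologicalSpace X]
    (f : ℕ → X → EReal) (g : X → EReal)
    (hconv : GammaConvergesTo f g)
    (xs : ℕ → X) (hmin : ∀ n y, f n (xs n) ≤ f n y)
    (φ : ℕ → ℕ) (hφ : StrictMono φ) (x : X)
    (hlim : Tendsto (fun k => xs (φ k)) atTop (𝓝 x)) :
    g x = ⨅ y, g y := by
  set m : ℕ → EReal := fun n => ⨅ z, f n z
  have hm : ∀ n, f n (xs n) = m n := fun n => le_antisymm (le_iInf (hmin n)) (iInf_le _ _)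
  have h_upper : g x ≤ liminf (fun k => m (φ k)) atTop := by
    rw [← (hconv x).1]
    simpa only [hm] using gammaLiminf_le_liminf_of_tendsto f hφ.tendsto_atTop hlim
  have h_lower : ∀ y, limsup m atTop ≤ g y := fun y =>
    (hconv y).2 ▸ limsup_iInf_le_gammaLimsup f y
  refine le_antisymm ?_ (iInf_le g x)
  calc g x ≤ liminf (m ∘ φ) atTop := h_upper
    _ ≤ limsup (m ∘ φ) atTop := liminf_le_limsup
    _ ≤ limsup m atTop := hφ.tendsto_atTop.limsup_comp_le_limsup
    _ ≤ ⨅ y, g y := le_iInf h_lower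

/-- If `(f_n)` Γ-converges to `f` on a first-countable space, `x_n` is a global
minimizer of `f_n` for each `n`, and a subsequence of `(x_n)` converges to `x`,
then `x` is a global minimizer of `f`. -/
theorem stmt0 {X : Type*} [TopologicalSpace X] [FirstCountableTopology X]
    (f : ℕ → X → EReal) (g : X → EReal)
    (hconv : GammaConvergesTo f g)
    (xs : ℕ → X) (hmin : ∀ n y, f n (xs n) ≤ f n y)
    (φ : ℕ → ℕ) (hφ : StrictMono φ) (x : X)
    (hlim : Tendsto (fun k => xs (φ k)) atTop (𝓝 x)) :
    g x = ⨅ y, g y :=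
  stmt0_general f g hconv xs hmin φ hφ x hlim
end

section
/- Let p > 1 and q > 1 satisfy 1/p + 1/q = 1, and let K_q = {(a, b) ∈ ℝ × ℝ^d : a + |b|^q / q ≤ 0}. Then for every t ∈ ℝ and x ∈ ℝ^d, the supremum f_p(t, x) := sup_{(a,b) ∈ K_q} (a·t + b·x) satisfies: f_p(t, x) = (1/p)·|x|^p / t^{p−1} if t > 0; f_p(t, x) = 0 if t = 0 and x = 0; and f_p(t, x) = +∞ if t = 0 and x ≠ 0, or if t < 0. -/
/-!
For `t > 0` the constraint is saturated at `a = -|b|^q/q`, so `f_p(t, x)` is the scaled Legendre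
transform `sup_b (b·x - t|b|^q/q)`. Young's inequality applied to `|b| t^{1/q}` and `|x| t^{-1/q}`
bounds it by `|x|^p / (p t^{p-1})`, with equality for `b = (|x|/t)^{p-1} x/|x|`. For `t < 0` take
`b = 0` and `a → -∞`; for `t = 0`, `x ≠ 0` take `b` a large multiple of `x`.
-/

open Filter

/-- `f_p(t,x) = sup_{(a,b) ∈ K_q} (a·t + b·x)`, where
`K_q = {(a,b) ∈ ℝ × ℝ^d : a + |b|^q/q ≤ 0}`; the supremum is taken in `ℝ ∪ {+∞}`. -/
noncomputable def fBB (d : ℕ) (q : ℝ) (t : ℝ) (x : EuclideanSpace ℝ (Fin d)) : EReal :=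
  ⨆ ab : {ab : ℝ × EuclideanSpace ℝ (Fin d) // ab.1 + ‖ab.2‖ ^ q / q ≤ 0},
    (((ab : ℝ × EuclideanSpace ℝ (Fin d)).1 * t +
        (inner ℝ (ab : ℝ × EuclideanSpace ℝ (Fin d)).2 x : ℝ) : ℝ) : EReal)

namespace Real

theorem zero_rpow_div_self (q : ℝ) : (0 : ℝ) ^ q / q = 0 := by
  rcases eq_or_ne q 0 with rfl | hq
  · simp
  · simp [zero_rpow hq]

variable {p q t : ℝ}

theorem young_inequality_scaled {a b : ℝ} (ha : 0 ≤ a) (hb : 0 ≤ b) (hpq : p.HolderConjugate q)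
    (ht : 0 < t) : a * b ≤ t * a ^ q / q + b ^ p / (p * t ^ (p - 1)) := by
  set s := t ^ q⁻¹
  have hs : 0 < s := rpow_pos_of_pos ht _
  have hsq : s ^ q = t := by
    rw [← rpow_mul ht.le, inv_mul_cancel₀ hpq.symm.ne_zero, rpow_one]
  have hsp : s ^ p = t ^ (p - 1) := by
    rw [← rpow_mul ht.le, ← hpq.div_conj_eq_sub_one, div_eq_inv_mul]
  have h := young_inequality_of_nonneg (div_nonneg hb hs.le) (mul_nonneg hs.le ha) hpq
  rw [div_rpow hb hs.le, mul_rpow hs.le ha, hsp, hsq] at h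
  calc a * b = b / s * (s * a) := by field_simp
    _ ≤ _ := h
    _ = _ := by ring

theorem young_inequality_scaled_eq {b : ℝ} (hb : 0 ≤ b) (hpq : p.HolderConjugate q) (ht : 0 < t) :
    (b / t) ^ (p - 1) * b = t * ((b / t) ^ (p - 1)) ^ q / q + b ^ p / (p * t ^ (p - 1)) := by
  have hbt : 0 ≤ b / t := div_nonneg hb ht.le
  have hpow : ∀ c : ℝ, 0 ≤ c → c ^ p = c ^ (p - 1) * c := fun c hc => by
    rw [← rpow_add_one' hc (by simpa using hpq.ne_zero), sub_add_cancel]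
  have hlhs : (b / t) ^ (p - 1) * b = b ^ p / t ^ (p - 1) := by
    rw [div_rpow hb ht.le, hpow b hb]; ring
  have hrhs : t * ((b / t) ^ (p - 1)) ^ q = b ^ p / t ^ (p - 1) := by
    rw [← rpow_mul hbt, hpq.sub_one_mul_conj, div_rpow hb ht.le, hpow t ht.le]
    field_simp
  rw [hlhs, hrhs]
  linear_combination -(b ^ p / t ^ (p - 1)) * hpq.inv_add_inv_eq_one

end Real

open Real

section InnerProductSpace

variable {E : Type*} [NormedAddCommGroup E] [InnerProductSpace ℝ E] {p q t : ℝ}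

theorem isGreatest_inner_sub_mul_rpow_div (hpq : p.HolderConjugate q) (ht : 0 < t) (x : E) :
    IsGreatest (Set.range fun b : E => inner ℝ b x - t * ‖b‖ ^ q / q)
      (‖x‖ ^ p / (p * t ^ (p - 1))) := by
  refine ⟨?_, ?_⟩
  · set r := (‖x‖ / t) ^ (p - 1)
    refine ⟨(r / ‖x‖) • x, ?_⟩
    rcases eq_or_ne x 0 with rfl | hx
    · simp [zero_rpow_div_self, mul_div_assoc, zero_rpow hpq.ne_zero]
    have hx' : 0 < ‖x‖ := norm_pos_iff.mpr hx
    have hr : 0 ≤ r := rpow_nonneg (div_nonneg hx'.le ht.le) _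
    have hnorm : ‖(r / ‖x‖) • x‖ = r := by
      rw [norm_smul, norm_div, norm_norm, Real.norm_of_nonneg hr, div_mul_cancel₀ _ hx'.ne']
    have hinner : inner ℝ ((r / ‖x‖) • x) x = r * ‖x‖ := by
      rw [real_inner_smul_left, real_inner_self_eq_norm_mul_norm]
      field_simp
    dsimp only
    rw [hnorm, hinner, young_inequality_scaled_eq (norm_nonneg x) hpq ht]
    ring
  · rintro _ ⟨b, rfl⟩
    have := young_inequality_scaled (norm_nonneg b) (norm_nonneg x) hpq ht
    linarith [real_inner_le_norm b x]

end InnerProductSpace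

section fBB

variable {d : ℕ} {p q t : ℝ}

theorem fBB_of_pos (hpq : p.HolderConjugate q) (ht : 0 < t) (x : EuclideanSpace ℝ (Fin d)) :
    fBB d q t x = ((‖x‖ ^ p / (p * t ^ (p - 1)) : ℝ) : EReal) := by
  obtain ⟨⟨b, hb⟩, hmax⟩ := isGreatest_inner_sub_mul_rpow_div hpq ht x
  apply le_antisymm
  · refine iSup_le fun ⟨⟨a', b'⟩, (hab : a' + ‖b'‖ ^ q / q ≤ 0)⟩ => EReal.coe_le_coe_iff.2 ?_
    calc a' * t + inner ℝ b' x ≤ inner ℝ b' x - t * ‖b'‖ ^ q / q := by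
          linear_combination mul_le_mul_of_nonneg_right hab ht.le
      _ ≤ _ := hmax ⟨b', rfl⟩
  · refine le_iSup_of_le ⟨(-(‖b‖ ^ q / q), b), by simp⟩ (EReal.coe_le_coe_iff.2 ?_)
    rw [← hb]
    exact le_of_eq (by ring)

theorem fBB_zero_zero : fBB d q 0 0 = 0 := by
  have : Nonempty {ab : ℝ × EuclideanSpace ℝ (Fin d) // ab.1 + ‖ab.2‖ ^ q / q ≤ 0} :=
    ⟨⟨0, by simp [zero_rpow_div_self]⟩⟩
  simp [fBB]

theorem fBB_zero_of_ne_zero {x : EuclideanSpace ℝ (Fin d)} (hx : x ≠ 0) :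
    fBB d q 0 x = ⊤ := by
  have hx' : ‖x‖ ≠ 0 := norm_ne_zero_iff.mpr hx
  refine (EReal.eq_top_iff_forall_lt _).2 fun M => lt_iSup_iff.2 ?_
  set b := ((M + 1) / ‖x‖ ^ 2) • x
  refine ⟨⟨(-(‖b‖ ^ q / q), b), by simp⟩, EReal.coe_lt_coe_iff.2 ?_⟩
  simp only [mul_zero, zero_add, b, real_inner_smul_left, real_inner_self_eq_norm_sq]
  field_simp
  linarith

theorem fBB_of_neg (ht : t < 0) (x : EuclideanSpace ℝ (Fin d)) : fBB d q t x = ⊤ := by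
  refine (EReal.eq_top_iff_forall_lt _).2 fun M => lt_iSup_iff.2 ?_
  have ha : (|M| + 1) / t ≤ 0 := div_nonpos_of_nonneg_of_nonpos (by positivity) ht.le
  refine ⟨⟨((|M| + 1) / t, 0), by simpa [zero_rpow_div_self] using ha⟩, EReal.coe_lt_coe_iff.2 ?_⟩
  simp only [inner_zero_left, add_zero, div_mul_cancel₀ _ ht.ne]
  linarith [le_abs_self M]

end fBB

theorem stmt3_general (d : ℕ) (p q : ℝ) (hp : 1 < p) (hpq : 1 / p + 1 / q = 1)
    (t : ℝ) (x : EuclideanSpace ℝ (Fin d)) :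
    (0 < t → fBB d q t x = (((1 / p) * ‖x‖ ^ p / t ^ (p - 1) : ℝ) : EReal)) ∧
    (t = 0 → x = 0 → fBB d q t x = 0) ∧
    (((t = 0 ∧ x ≠ 0) ∨ t < 0) → fBB d q t x = ⊤) := by
  have hpq' : p.HolderConjugate q := holderConjugate_iff.2 ⟨hp, by simpa using hpq⟩
  refine ⟨fun ht => ?_, fun ht hx => ht ▸ hx ▸ fBB_zero_zero, ?_⟩
  · rw [fBB_of_pos hpq' ht]
    congr 1
    ring
  · rintro (⟨rfl, hx⟩ | ht)
    · exact fBB_zero_of_ne_zero hx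
    · exact fBB_of_neg ht x

/-- Pointwise characterization of the Benamou–Brenier integrand: for conjugate exponents
`p, q > 1`, the supremum `f_p(t,x) = sup_{(a,b) ∈ K_q}(a t + b·x)` equals
`(1/p)|x|^p / t^{p−1}` for `t > 0`, equals `0` for `t = 0, x = 0`, and equals `+∞`
when `t = 0, x ≠ 0` or `t < 0`. -/
theorem stmt3 (d : ℕ) (p q : ℝ) (hp : 1 < p) (hq : 1 < q) (hpq : 1 / p + 1 / q = 1)
    (t : ℝ) (x : EuclideanSpace ℝ (Fin d)) :
    (0 < t → fBB d q t x = (((1 / p) * ‖x‖ ^ p / t ^ (p - 1) : ℝ) : EReal)) ∧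
    (t = 0 → x = 0 → fBB d q t x = 0) ∧
    (((t = 0 ∧ x ≠ 0) ∨ t < 0) → fBB d q t x = ⊤) :=
  stmt3_general d p q hp hpq t x
end

section
/- Let D ⊂ ℝ^d be a compact set, Θ ⊂ ℝ^{d₁} a compact set, and F : Θ × D → ℝ a continuous function such that there exists L ≥ 0 with F(θ, ·) L-Lipschitz on D for every θ ∈ Θ. Let (μ_N) and μ be Borel probability measures on D with W₁(μ_N, μ) → 0, and for each N let θ_N ∈ Θ be a global minimizer of θ ↦ ∫_D F(θ, x) μ_N(dx) over Θ. Then lim_{N→∞} ∫_D F(θ_N, x) μ_N(dx) = min_{θ ∈ Θ} ∫_D F(θ, x) μ(dx), and every cluster point θ* of the sequence (θ_N) is a global minimizer of θ ↦ ∫_D F(θ, x) μ(dx) over Θ. -/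
open Filter MeasureTheory Topology
open scoped ENNReal

/-- The Wasserstein-1 distance between two Borel measures, defined as the infimum
of `∫ |x−y| dγ` over all couplings `γ` (probability measures on the product with
the given marginals). -/
noncomputable def W1 {E : Type*} [MeasurableSpace E] [PseudoEMetricSpace E]
    (μ ν : MeasureTheory.Measure E) : ℝ≥0∞ :=
  ⨅ (γ : MeasureTheory.Measure (E × E)) (_ : MeasureTheory.IsProbabilityMeasure γ)
    (_ : γ.map Prod.fst = μ) (_ : γ.map Prod.snd = ν),
    ∫⁻ p, edist p.1 p.2 ∂γ

/-!
Integrating a coupling of `μ_N` and `μ` shows that integrals of `K`-Lipschitz functions differ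
by at most `K · W₁(μ_N, μ)`, so the empirical objectives `θ ↦ ∫ F(θ, ·) dμ_N` converge to
`θ ↦ ∫ F(θ, ·) dμ` uniformly on `Θ`. Under uniform convergence, minimal values converge to the
minimal value of the limit, which is attained since the limit objective is continuous on the
compact set `Θ`; and along the minimizers `θ_N` the limit objective also tends to its minimum,
so by continuity it attains the minimum at every cluster point.
-/

open scoped NNReal

theorem enorm_integral_sub_le_mul_lintegral_edist {E : Type*} [PseudoEMetricSpace E]
    [MeasurableSpace E] {D : Set E} {K : ℝ≥0} {f : E → ℝ} (hf : LipschitzOnWith K f D)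
    {μ ν : Measure E} (hμD : ∀ᵐ x ∂μ, x ∈ D) (hνD : ∀ᵐ x ∂ν, x ∈ D)
    (hfμ : Integrable f μ) (hfν : Integrable f ν)
    {γ : Measure (E × E)} (hγ₁ : γ.map Prod.fst = μ) (hγ₂ : γ.map Prod.snd = ν) :
    ‖∫ x, f x ∂μ - ∫ x, f x ∂ν‖ₑ ≤ K * ∫⁻ p, edist p.1 p.2 ∂γ := by
  subst hγ₁ hγ₂
  have hD : ∀ᵐ p ∂γ, p.1 ∈ D ∧ p.2 ∈ D :=
    (ae_of_ae_map measurable_fst.aemeasurable hμD).and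
      (ae_of_ae_map measurable_snd.aemeasurable hνD)
  calc ‖∫ x, f x ∂(γ.map Prod.fst) - ∫ x, f x ∂(γ.map Prod.snd)‖ₑ
      = ‖∫ p, (f p.1 - f p.2) ∂γ‖ₑ := by
        rw [integral_map measurable_fst.aemeasurable hfμ.aestronglyMeasurable,
          integral_map measurable_snd.aemeasurable hfν.aestronglyMeasurable]
        exact congrArg _
          (integral_sub (hfμ.comp_measurable measurable_fst) (hfν.comp_measurable measurable_snd)).symm
    _ ≤ ∫⁻ p, edist (f p.1) (f p.2) ∂γ := by
        simpa only [edist_eq_enorm_sub] using enorm_integral_le_lintegral_enorm _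
    _ ≤ ∫⁻ p, K * edist p.1 p.2 ∂γ := lintegral_mono_ae (hD.mono fun p hp => hf hp.1 hp.2)
    _ = K * ∫⁻ p, edist p.1 p.2 ∂γ := lintegral_const_mul' _ _ ENNReal.coe_ne_top

theorem exists_coupling_lintegral_edist_lt_of_W1_lt {E : Type*} [PseudoEMetricSpace E]
    [MeasurableSpace E] {μ ν : Measure E} {r : ℝ≥0∞} (h : W1 μ ν < r) :
    ∃ γ : Measure (E × E), IsProbabilityMeasure γ ∧ γ.map Prod.fst = μ ∧
      γ.map Prod.snd = ν ∧ ∫⁻ p, edist p.1 p.2 ∂γ < r := by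
  simpa only [W1, iInf_lt_iff, exists_prop] using h

theorem tendstoUniformlyOn_integral_of_tendsto_W1 {α ι E : Type*} [PseudoEMetricSpace E]
    [MeasurableSpace E] {l : Filter ι} {D : Set E} {Θ : Set α} {F : α → E → ℝ} {K : ℝ≥0}
    (hF : ∀ θ ∈ Θ, LipschitzOnWith K (F θ) D) {μs : ι → Measure E} {μ : Measure E}
    (hμsD : ∀ i, ∀ᵐ x ∂μs i, x ∈ D) (hμD : ∀ᵐ x ∂μ, x ∈ D)
    (hFμs : ∀ i, ∀ θ ∈ Θ, Integrable (F θ) (μs i)) (hFμ : ∀ θ ∈ Θ, Integrable (F θ) μ)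
    (hW : Tendsto (fun i => W1 (μs i) μ) l (𝓝 0)) :
    TendstoUniformlyOn (fun i θ => ∫ x, F θ x ∂μs i) (fun θ => ∫ x, F θ x ∂μ) l Θ := by
  rw [EMetric.tendstoUniformlyOn_iff]
  intro ε hε
  obtain ⟨δ, hδ, hδK⟩ := ENNReal.exists_nnreal_pos_mul_lt ENNReal.coe_ne_top hε.ne'
  filter_upwards [hW.eventually_lt_const (ENNReal.coe_pos.2 hδ)] with i hi θ hθ
  obtain ⟨γ, -, hγ₁, hγ₂, hγ⟩ := exists_coupling_lintegral_edist_lt_of_W1_lt hi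
  rw [edist_comm, edist_eq_enorm_sub]
  calc _ ≤ K * ∫⁻ p, edist p.1 p.2 ∂γ :=
        enorm_integral_sub_le_mul_lintegral_edist (hF θ hθ) (hμsD i) hμD (hFμs i θ hθ)
          (hFμ θ hθ) hγ₁ hγ₂
    _ ≤ K * δ := by gcongr
    _ < ε := by rwa [mul_comm]

theorem TendstoUniformlyOn.tendsto_apply_of_isMinOn {α ι : Type*} {l : Filter ι} {Θ : Set α}
    {G : ι → α → ℝ} {g : α → ℝ} (hG : TendstoUniformlyOn G g l Θ) {θ : ι → α} {θm : α}
    (hθ : ∀ i, θ i ∈ Θ) (hmin : ∀ i, IsMinOn (G i) Θ (θ i)) (hθm : θm ∈ Θ)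
    (hgmin : IsMinOn g Θ θm) :
    Tendsto (fun i => G i (θ i)) l (𝓝 (g θm)) := by
  rw [Metric.tendsto_nhds]
  intro ε hε
  filter_upwards [Metric.tendstoUniformlyOn_iff.1 hG ε hε] with i hi
  have h₁ := abs_sub_lt_iff.1 (hi _ (hθ i))
  have h₂ := abs_sub_lt_iff.1 (hi _ hθm)
  have h₃ : G i (θ i) ≤ G i θm := hmin i hθm
  have h₄ : g θm ≤ g (θ i) := hgmin (hθ i)
  rw [Real.dist_eq, abs_sub_lt_iff]
  constructor <;> linarith

theorem TendstoUniformlyOn.tendsto_comp_of_isMinOn {α ι : Type*} {l : Filter ι} {Θ : Set α}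
    {G : ι → α → ℝ} {g : α → ℝ} (hG : TendstoUniformlyOn G g l Θ) {θ : ι → α} {θm : α}
    (hθ : ∀ i, θ i ∈ Θ) (hmin : ∀ i, IsMinOn (G i) Θ (θ i)) (hθm : θm ∈ Θ)
    (hgmin : IsMinOn g Θ θm) :
    Tendsto (fun i => g (θ i)) l (𝓝 (g θm)) := by
  rw [Metric.tendsto_nhds]
  intro ε hε
  filter_upwards [Metric.tendstoUniformlyOn_iff.1 hG (ε / 2) (half_pos hε)] with i hi
  have h₁ := abs_sub_lt_iff.1 (hi _ (hθ i))
  have h₂ := abs_sub_lt_iff.1 (hi _ hθm)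
  have h₃ : G i (θ i) ≤ G i θm := hmin i hθm
  have h₄ : g θm ≤ g (θ i) := hgmin (hθ i)
  rw [Real.dist_eq, abs_sub_lt_iff]
  constructor <;> linarith

theorem MapClusterPt.eq_of_tendsto_comp {X Y ι : Type*} [TopologicalSpace X]
    [TopologicalSpace Y] [T2Space Y] {l : Filter ι} {u : ι → X} {x : X} {s : Set X}
    {g : X → Y} {c : Y} (hx : MapClusterPt x l u) (hu : ∀ᶠ i in l, u i ∈ s)
    (hg : ContinuousWithinAt g s x) (hlim : Tendsto (g ∘ u) l (𝓝 c)) : g x = c := by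
  have hgx : MapClusterPt (g x) l (g ∘ u) :=
    hx.tendsto_comp' (hg.mono_left (inf_le_inf_left _ (le_principal_iff.2 hu)))
  exact eq_of_nhds_neBot (hgx.neBot.mono (inf_le_inf_left _ hlim))

theorem ContinuousOn.integrable_of_ae_mem {X : Type*} [TopologicalSpace X] [T2Space X]
    [MeasurableSpace X] [OpensMeasurableSpace X] {D : Set X} (hD : IsCompact D) {f : X → ℝ}
    (hf : ContinuousOn f D) {μ : Measure X} [IsFiniteMeasure μ] (hμD : ∀ᵐ x ∂μ, x ∈ D) :
    Integrable f μ := by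
  rw [← Measure.restrict_eq_self_of_ae_mem hμD]
  exact hf.integrableOn_compact hD

theorem continuousOn_integral_of_continuousOn_prod {X Y : Type*} [TopologicalSpace X]
    [FirstCountableTopology X]
    [TopologicalSpace Y] [T2Space Y] [MeasurableSpace Y] [OpensMeasurableSpace Y]
    {Θ : Set X} {D : Set Y} (hΘ : IsCompact Θ) (hD : IsCompact D) {F : X → Y → ℝ}
    (hF : ContinuousOn (Function.uncurry F) (Θ ×ˢ D)) {μ : Measure Y} [IsFiniteMeasure μ]
    (hμD : ∀ᵐ y ∂μ, y ∈ D) :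
    ContinuousOn (fun θ => ∫ y, F θ y ∂μ) Θ := by
  obtain ⟨M, hM⟩ := (hΘ.prod hD).exists_bound_of_continuousOn hF
  refine continuousOn_of_dominated (bound := fun _ => M)
    (fun θ hθ => ((hF.uncurry_left θ hθ).integrable_of_ae_mem hD hμD).aestronglyMeasurable)
    (fun θ hθ => hμD.mono fun y hy => hM (θ, y) ⟨hθ, hy⟩) (integrable_const M)
    (hμD.mono fun y hy => hF.comp (Continuous.prodMk_left y).continuousOn fun θ hθ => ⟨hθ, hy⟩)

theorem stmt16_general (d d₁ : ℕ)
    (D : Set (EuclideanSpace ℝ (Fin d))) (hD : IsCompact D)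
    (Θ : Set (EuclideanSpace ℝ (Fin d₁))) (hΘ : IsCompact Θ)
    (F : EuclideanSpace ℝ (Fin d₁) → EuclideanSpace ℝ (Fin d) → ℝ)
    (hFcont : ContinuousOn
      (fun p : EuclideanSpace ℝ (Fin d₁) × EuclideanSpace ℝ (Fin d) => F p.1 p.2)
      (Θ ×ˢ D))
    (L : ℝ)
    (hFlip : ∀ θ ∈ Θ, ∀ x ∈ D, ∀ y ∈ D, |F θ x - F θ y| ≤ L * ‖x - y‖)
    (μs : ℕ → MeasureTheory.Measure (EuclideanSpace ℝ (Fin d)))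
    (μ : MeasureTheory.Measure (EuclideanSpace ℝ (Fin d)))
    [∀ N, MeasureTheory.IsProbabilityMeasure (μs N)]
    [MeasureTheory.IsProbabilityMeasure μ]
    (hμs : ∀ N, μs N Dᶜ = 0) (hμ : μ Dᶜ = 0)
    (hW : Tendsto (fun N => W1 (μs N) μ) atTop (𝓝 0))
    (θN : ℕ → EuclideanSpace ℝ (Fin d₁)) (hθN : ∀ N, θN N ∈ Θ)
    (hminN : ∀ N, ∀ θ ∈ Θ, (∫ x, F (θN N) x ∂(μs N)) ≤ ∫ x, F θ x ∂(μs N)) :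
    Tendsto (fun N => ∫ x, F (θN N) x ∂(μs N)) atTop
      (𝓝 (⨅ θ : Θ, ∫ x, F θ x ∂μ)) ∧
    ∀ θstar : EuclideanSpace ℝ (Fin d₁), MapClusterPt θstar atTop θN →
      θstar ∈ Θ ∧ ∀ θ ∈ Θ, (∫ x, F θstar x ∂μ) ≤ ∫ x, F θ x ∂μ := by
  have hμsD (N : ℕ) : ∀ᵐ x ∂μs N, x ∈ D := mem_ae_iff.2 (hμs N)
  have hμD : ∀ᵐ x ∂μ, x ∈ D := mem_ae_iff.2 hμ
  have hlip (θ : _) (hθ : θ ∈ Θ) : LipschitzOnWith (Real.toNNReal L) (F θ) D :=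
    .of_dist_le' fun x hx y hy => by
      rw [Real.dist_eq, dist_eq_norm]
      exact hFlip θ hθ x hx y hy
  have hint {ν : Measure _} [IsFiniteMeasure ν] (hνD : ∀ᵐ x ∂ν, x ∈ D) (θ : _) (hθ : θ ∈ Θ) :
      Integrable (F θ) ν :=
    (hFcont.uncurry_left θ hθ).integrable_of_ae_mem hD hνD
  have hunif := tendstoUniformlyOn_integral_of_tendsto_W1 hlip hμsD hμD
    (fun N => hint (hμsD N)) (hint hμD) hW
  have hcont := continuousOn_integral_of_continuousOn_prod hΘ hD hFcont hμD
  obtain ⟨θm, hθm, hθm_min⟩ := hΘ.exists_isMinOn ⟨θN 0, hθN 0⟩ hcont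
  rw [hθm_min.iInf_eq hθm]
  refine ⟨hunif.tendsto_apply_of_isMinOn hθN hminN hθm hθm_min, fun θstar hθstar => ?_⟩
  have hmem : θstar ∈ Θ := hΘ.isClosed.mem_of_mapClusterPt hθstar (.of_forall hθN)
  have hval := hθstar.eq_of_tendsto_comp (.of_forall hθN) (hcont θstar hmem)
    (hunif.tendsto_comp_of_isMinOn hθN hminN hθm hθm_min)
  exact ⟨hmem, fun θ hθ => hval.le.trans (hθm_min hθ)⟩

/-- Convergence of empirical risk minimizers: if `F : Θ × D → ℝ` is continuous on the
compact sets `Θ × D`, uniformly `L`-Lipschitz in `x`, `W₁(μ_N, μ) → 0`, and `θ_N`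
minimizes `θ ↦ ∫ F(θ,x) μ_N(dx)` over `Θ`, then the optimal values converge to
`min_{θ ∈ Θ} ∫ F(θ,x) μ(dx)` and every cluster point of `(θ_N)` is a global minimizer
of `θ ↦ ∫ F(θ,x) μ(dx)` over `Θ`. -/
theorem stmt16 (d d₁ : ℕ)
    (D : Set (EuclideanSpace ℝ (Fin d))) (hD : IsCompact D)
    (Θ : Set (EuclideanSpace ℝ (Fin d₁))) (hΘ : IsCompact Θ)
    (F : EuclideanSpace ℝ (Fin d₁) → EuclideanSpace ℝ (Fin d) → ℝ)
    (hFcont : ContinuousOn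
      (fun p : EuclideanSpace ℝ (Fin d₁) × EuclideanSpace ℝ (Fin d) => F p.1 p.2)
      (Θ ×ˢ D))
    (L : ℝ) (hL : 0 ≤ L)
    (hFlip : ∀ θ ∈ Θ, ∀ x ∈ D, ∀ y ∈ D, |F θ x - F θ y| ≤ L * ‖x - y‖)
    (μs : ℕ → MeasureTheory.Measure (EuclideanSpace ℝ (Fin d)))
    (μ : MeasureTheory.Measure (EuclideanSpace ℝ (Fin d)))
    [∀ N, MeasureTheory.IsProbabilityMeasure (μs N)]
    [MeasureTheory.IsProbabilityMeasure μ]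
    (hμs : ∀ N, μs N Dᶜ = 0) (hμ : μ Dᶜ = 0)
    (hW : Tendsto (fun N => W1 (μs N) μ) atTop (𝓝 0))
    (θN : ℕ → EuclideanSpace ℝ (Fin d₁)) (hθN : ∀ N, θN N ∈ Θ)
    (hminN : ∀ N, ∀ θ ∈ Θ, (∫ x, F (θN N) x ∂(μs N)) ≤ ∫ x, F θ x ∂(μs N)) :
    Tendsto (fun N => ∫ x, F (θN N) x ∂(μs N)) atTop
      (𝓝 (⨅ θ : Θ, ∫ x, F θ x ∂μ)) ∧
    ∀ θstar : EuclideanSpace ℝ (Fin d₁), MapClusterPt θstar atTop θN →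
      θstar ∈ Θ ∧ ∀ θ ∈ Θ, (∫ x, F θstar x ∂μ) ≤ ∫ x, F θ x ∂μ :=
  stmt16_general d d₁ D hD Θ hΘ F hFcont L hFlip μs μ hμs hμ hW θN hθN hminN
end
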